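/- arXiv:math/0504324 — 2 statements merged into one kernel-verified Lean document; each statement's English description precedes it below -/
import Mathlib

section
/- Let E be a properly immersed surface in an open set D̃ ⊂ ℝ³ with E homeomorphic to a half-open annulus, let t ∈ ℝ, and suppose the plane P_t = {x₃ = t} satisfies: P_t ∩ D̃ is exhausted by compact sets whose boundaries are disjoint from E. If there are points p, q in the limit set of E with x₃(p) < t < x₃(q), then every component of P_t ∩ E is compact while P_t ∩ E is noncompact. -/
open Set

/-- Let `E` be a properly immersed annular end in an open set `Dt ⊂ ℝ³` and `P_t = {x₃ = t}`
a plane such that `P_t ∩ Dt` is exhausted by compact sets whose boundaries are disjoint from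
`E`.  If there are points `p, q` in the limit set of `E` with `x₃(p) < t < x₃(q)`, then every
component of `P_t ∩ E` is compact while `P_t ∩ E` is noncompact. -/
theorem annular_end_plane_intersection
    (Dt : Set (EuclideanSpace ℝ (Fin 3))) (hD : IsOpen Dt)
    (M : Type*) [TopologicalSpace M]
    (hann : Nonempty (M ≃ₜ (Metric.sphere (0 : ℂ) 1) × (Set.Ici (0 : ℝ))))
    (f : M → EuclideanSpace ℝ (Fin 3)) (hcont : Continuous f)
    (hrange : Set.range f ⊆ Dt)
    (hproper : ∀ K : Set (EuclideanSpace ℝ (Fin 3)), K ⊆ Dt → IsCompact K →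
      IsCompact (f ⁻¹' K))
    (t : ℝ)
    -- exhaustion of `P_t ∩ Dt` by compact subsets of the plane `P_t`,
    -- with boundaries (relative to the plane) disjoint from the image of `f`
    (K : ℕ → Set {x : EuclideanSpace ℝ (Fin 3) // x 2 = t})
    (hKc : ∀ n, IsCompact (K n))
    (hKmono : ∀ n, K n ⊆ interior (K (n + 1)))
    (hKunion : (⋃ n, K n) = Subtype.val ⁻¹' Dt)
    (hKbdry : ∀ n, Disjoint (Subtype.val '' frontier (K n)) (Set.range f))
    -- points of the limit set separated by the plane
    (p q : EuclideanSpace ℝ (Fin 3))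
    (hp : p ∈ closure (Set.range f) \ Dt) (hq : q ∈ closure (Set.range f) \ Dt)
    (hpq : p 2 < t ∧ t < q 2) :
    (∀ m ∈ f ⁻¹' {x | x 2 = t},
      IsCompact (connectedComponentIn (f ⁻¹' {x | x 2 = t}) m)) ∧
    ¬ IsCompact (f ⁻¹' {x | x 2 = t}) := by
  obtain ⟨h⟩ := hann
  have heval : Continuous fun x : EuclideanSpace ℝ (Fin 3) => x 2 :=
    (EuclideanSpace.proj (2 : Fin 3)).continuous
  set S : Set M := f ⁻¹' {x | x 2 = t} with hSdef
  have hSclosed : IsClosed S :=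
    (isClosed_eq heval continuous_const).preimage hcont
  constructor
  · -- every connected component of `S` is compact
    intro m hm
    set m' : S := ⟨m, hm⟩
    -- the map to the plane
    set g : S → {x : EuclideanSpace ℝ (Fin 3) // x 2 = t} :=
      fun z => ⟨f z.1, z.2⟩ with hg
    have hgc : Continuous g :=
      Continuous.subtype_mk (hcont.comp continuous_subtype_val) _
    set T : Set {x : EuclideanSpace ℝ (Fin 3) // x 2 = t} :=
      g '' connectedComponent m' with hT
    have hTpc : IsPreconnected T :=
      isPreconnected_connectedComponent.image g hgc.continuousOn
    have hTrange : ∀ z ∈ T, (z : EuclideanSpace ℝ (Fin 3)) ∈ Set.range f := by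
      rintro z ⟨w, _, rfl⟩; exact ⟨w, rfl⟩
    have hTsub : T ⊆ ⋃ n, K n := by
      intro z hz
      rw [hKunion]
      exact hrange (hTrange z hz)
    have hTfr : ∀ n, Disjoint T (frontier (K n)) := by
      intro n
      rw [Set.disjoint_left]
      intro z hzT hzF
      exact (hKbdry n).le_bot ⟨⟨z, hzF, rfl⟩, hTrange z hzT⟩
    have hx'T : g m' ∈ T := ⟨m', mem_connectedComponent, rfl⟩
    obtain ⟨n, hn⟩ : ∃ n, g m' ∈ K n := Set.mem_iUnion.1 (hTsub hx'T)
    have hKcl : IsClosed (K n) := (hKc n).isClosed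
    have hx'int : g m' ∈ interior (K n) := by
      have hnf : g m' ∉ frontier (K n) := fun hf =>
        (hTfr n).le_bot ⟨hx'T, hf⟩
      rw [hKcl.frontier_eq] at hnf
      by_contra hi
      exact hnf ⟨hn, hi⟩
    -- the component in the plane stays in `K n`
    have hTK : T ⊆ interior (K n) := by
      intro z hz
      by_contra hzU
      have hzV : z ∈ (closure (K n))ᶜ := by
        have hnf : z ∉ frontier (K n) := fun hf => (hTfr n).le_bot ⟨hz, hf⟩
        simp only [frontier, Set.mem_diff, not_and, not_not] at hnf
        intro hcl
        exact hzU (hnf hcl)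
      have := hTpc (interior (K n)) (closure (K n))ᶜ isOpen_interior
        (isClosed_closure.isOpen_compl)
        (by
          intro w hw
          by_cases hwc : w ∈ closure (K n)
          · left
            have hnf : w ∉ frontier (K n) := fun hf => (hTfr n).le_bot ⟨hw, hf⟩
            simp only [frontier, Set.mem_diff, not_and, not_not] at hnf
            exact hnf hwc
          · right; exact hwc)
        ⟨g m', hx'T, hx'int⟩ ⟨z, hz, hzV⟩
      obtain ⟨w, -, hw1, hw2⟩ := this
      exact hw2 (subset_closure (interior_subset hw1))
    -- conclude compactness
    have hKD : Subtype.val '' K n ⊆ Dt := by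
      rintro x ⟨k, hk, rfl⟩
      have : k ∈ ⋃ i, K i := Set.mem_iUnion.2 ⟨n, hk⟩
      rw [hKunion] at this
      exact this
    have hKcomp : IsCompact (Subtype.val '' K n) :=
      (hKc n).image continuous_subtype_val
    have hbig : IsCompact (f ⁻¹' (Subtype.val '' K n)) :=
      hproper _ hKD hKcomp
    have hCsub : connectedComponentIn S m ⊆ f ⁻¹' (Subtype.val '' K n) := by
      rw [connectedComponentIn_eq_image hm]
      rintro y ⟨w, hw, rfl⟩
      have : g w ∈ T := ⟨w, hw, rfl⟩
      exact ⟨g w, interior_subset (hTK this), rfl⟩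
    have hCclosed : IsClosed (connectedComponentIn S m) := by
      rw [connectedComponentIn_eq_image hm]
      exact (hSclosed.isClosedEmbedding_subtypeVal.isClosedMap _
        isClosed_connectedComponent)
    exact hbig.of_isClosed_subset hCclosed hCsub
  · -- `S` is not compact
    intro hS
    set φ : M → ℝ := fun m => ((h m).2 : ℝ) with hφ
    have hφc : Continuous φ :=
      continuous_subtype_val.comp (continuous_snd.comp h.continuous)
    obtain ⟨R, hR⟩ : BddAbove (φ '' S) := (hS.image hφc).bddAbove
    set B : ℝ := max R 0 with hB
    have hRS : ∀ m ∈ S, φ m ≤ B := fun m hm =>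
      le_trans (hR ⟨m, hm, rfl⟩) (le_max_left _ _)
    -- the subend beyond `B`
    set E' : Set M := φ ⁻¹' Set.Ioi B with hE'
    have hE'S : ∀ m ∈ E', m ∉ S := by
      intro m hm hmS
      exact absurd (hRS m hmS) (not_le.2 hm)
    -- `E'` is connected: it is the range of a map from a connected space
    have hIoi : ∀ y : ℝ, y ∈ Set.Ioi B → (0 : ℝ) ≤ y := fun y hy =>
      le_of_lt (lt_of_le_of_lt (le_max_right _ _) hy)
    set F : (Metric.sphere (0 : ℂ) 1) × (Set.Ioi B) → M :=
      fun w => h.symm (w.1, ⟨w.2.1, hIoi _ w.2.2⟩) with hF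
    have hFc : Continuous F := by
      apply h.symm.continuous.comp
      exact continuous_fst.prodMk
        (Continuous.subtype_mk (continuous_subtype_val.comp continuous_snd) _)
    have hrangeF : Set.range F = E' := by
      ext m
      constructor
      · rintro ⟨w, rfl⟩
        show φ (h.symm _) ∈ Set.Ioi B
        simp only [hφ, Homeomorph.apply_symm_apply]
        exact w.2.2
      · intro hm
        refine ⟨((h m).1, ⟨φ m, hm⟩), ?_⟩
        show h.symm ((h m).1, _) = m
        have : (⟨φ m, hIoi _ hm⟩ : Set.Ici (0 : ℝ)) = (h m).2 := Subtype.ext rfl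
        rw [this, Prod.mk.eta, Homeomorph.symm_apply_apply]
    have hsphere : ConnectedSpace (Metric.sphere (0 : ℂ) 1) := by
      have : IsConnected (Metric.sphere (0 : ℂ) 1) := by
        apply isConnected_sphere _ _ zero_le_one
        rw [Complex.rank_real_complex]
        norm_num
      exact Subtype.connectedSpace this
    have hIoiconn : ConnectedSpace (Set.Ioi B) :=
      Subtype.connectedSpace ⟨⟨B + 1, by simp⟩, isPreconnected_Ioi⟩
    have hE'conn : IsPreconnected E' := by
      rw [← hrangeF]
      exact (isPreconnected_range hFc)
    -- `f` never hits the plane on `E'`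
    have hne : ∀ m ∈ E', f m 2 ≠ t := fun m hm => hE'S m hm
    -- complement of `E'` is compact
    have hcompl : IsCompact E'ᶜ := by
      have : E'ᶜ = h ⁻¹' (Set.univ ×ˢ (Subtype.val ⁻¹' Set.Icc 0 B)) := by
        ext m
        simp only [Set.mem_compl_iff, hE', Set.mem_preimage, Set.mem_Ioi, not_lt,
          Set.mem_prod, Set.mem_univ, true_and, Set.mem_Icc]
        constructor
        · intro hle; exact ⟨(h m).2.2, hle⟩
        · intro hle; exact hle.2
      rw [this, ← Homeomorph.image_symm]
      apply IsCompact.image _ h.symm.continuous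
      exact isCompact_univ.prod
        ((isClosed_Ici.isClosedEmbedding_subtypeVal).isCompact_preimage isCompact_Icc)
    have hfc : IsCompact (f '' E'ᶜ) := hcompl.image hcont
    -- any limit point outside `Dt` is a limit point of `f '' E'`
    have hlim : ∀ x ∈ closure (Set.range f) \ Dt, x ∈ closure (f '' E') := by
      rintro x ⟨hx, hxD⟩
      have hsplit : Set.range f ⊆ f '' E' ∪ f '' E'ᶜ := by
        rintro y ⟨m, rfl⟩
        by_cases hmE : m ∈ E'
        · exact Or.inl ⟨m, hmE, rfl⟩
        · exact Or.inr ⟨m, hmE, rfl⟩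
      have := closure_mono hsplit hx
      rw [closure_union, hfc.isClosed.closure_eq] at this
      rcases this with h1 | h2
      · exact h1
      · exact absurd (hrange (Set.image_subset_range f _ h2)) hxD
    -- the sign of `x₃ - t` is constant on `E'`
    by_cases hcase : ∀ m ∈ E', t < f m 2
    · -- then `p` cannot be a limit point below the plane
      have hpcl : p ∈ closure (f '' E') := hlim p hp
      have : p ∈ {x : EuclideanSpace ℝ (Fin 3) | t ≤ x 2} := by
        have hcl : IsClosed {x : EuclideanSpace ℝ (Fin 3) | t ≤ x 2} :=
          isClosed_le continuous_const heval
        apply hcl.closure_subset_iff.2 _ hpcl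
        rintro y ⟨m, hm, rfl⟩
        exact le_of_lt (hcase m hm)
      exact absurd hpq.1 (not_lt.2 this)
    · push_neg at hcase
      obtain ⟨m₀, hm₀E, hm₀⟩ := hcase
      have hm₀lt : f m₀ 2 < t := lt_of_le_of_ne hm₀ (hne m₀ hm₀E)
      have hall : ∀ m ∈ E', f m 2 < t := by
        intro m hm
        by_contra hge
        have hgt : t < f m 2 := lt_of_le_of_ne (not_lt.1 hge) (Ne.symm (hne m hm))
        have := hE'conn ((fun m => f m 2) ⁻¹' Set.Iio t)
          ((fun m => f m 2) ⁻¹' Set.Ioi t)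
          (isOpen_Iio.preimage (heval.comp hcont))
          (isOpen_Ioi.preimage (heval.comp hcont))
          (by intro w hw; rcases lt_or_gt_of_ne (hne w hw) with h' | h'
              · exact Or.inl h'
              · exact Or.inr h')
          ⟨m₀, hm₀E, hm₀lt⟩ ⟨m, hm, hgt⟩
        obtain ⟨w, -, hw1, hw2⟩ := this
        simp only [Set.mem_preimage, Set.mem_Iio, Set.mem_Ioi] at hw1 hw2
        exact lt_irrefl t (hw2.trans hw1)
      -- then `q` cannot be a limit point above the plane
      have hqcl : q ∈ closure (f '' E') := hlim q hq
      have : q ∈ {x : EuclideanSpace ℝ (Fin 3) | x 2 ≤ t} := by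
        have hcl : IsClosed {x : EuclideanSpace ℝ (Fin 3) | x 2 ≤ t} :=
          isClosed_le heval continuous_const
        apply hcl.closure_subset_iff.2 _ hqcl
        rintro y ⟨m, hm, rfl⟩
        exact le_of_lt (hall m hm)
      exact absurd hpq.2 (not_lt.2 this)
end

section
/- Let f : M → N be a proper continuous map from a noncompact space M, let P ⊂ N be closed, and suppose P ∩ (closure of range) is covered by an increasing exhaustion of compact sets K_n with f(M) ∩ ∂K_n = ∅ for all n. Then every connected component of f⁻¹(P) is compact. -/
open Set

/-- Let `f : M → N` be a proper continuous map from a noncompact space, `P ⊆ N` closed, and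
suppose `P ∩ closure(range f)` is covered by an increasing exhaustion of compact sets `K n`
with `f(M) ∩ ∂(K n) = ∅`.  Then every connected component of `f⁻¹(P)` is compact. -/
theorem components_of_preimage_compact
    (M N : Type*) [TopologicalSpace M] [TopologicalSpace N] [T2Space N]
    (hMnc : ¬ CompactSpace M)
    (f : M → N) (hcont : Continuous f)
    (hproper : ∀ K : Set N, IsCompact K → IsCompact (f ⁻¹' K))
    (P : Set N) (hP : IsClosed P)
    (K : ℕ → Set N) (hKc : ∀ n, IsCompact (K n))
    (hKmono : ∀ n, K n ⊆ interior (K (n + 1)))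
    (hKcover : P ∩ closure (Set.range f) ⊆ ⋃ n, K n)
    (hKbdry : ∀ n, Set.range f ∩ frontier (K n) = ∅) :
    ∀ x ∈ f ⁻¹' P, IsCompact (connectedComponentIn (f ⁻¹' P) x) := by
  intro x hx
  set C := connectedComponentIn (f ⁻¹' P) x with hC
  have hCsub : C ⊆ f ⁻¹' P := connectedComponentIn_subset _ _
  have hCpre : IsPreconnected C := isPreconnected_connectedComponentIn
  -- C is closed
  have hclosed : IsClosed C := by
    have h1 : closure C ⊆ C := by
      apply IsPreconnected.subset_connectedComponentIn hCpre.closure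
        (subset_closure (mem_connectedComponentIn hx))
      calc closure C ⊆ closure (f ⁻¹' P) := closure_mono hCsub
        _ = f ⁻¹' P := (hP.preimage hcont).closure_eq
    exact isClosed_of_closure_subset h1
  -- find n with f x ∈ K n
  obtain ⟨n, hn⟩ := mem_iUnion.mp (hKcover ⟨hx, subset_closure ⟨x, rfl⟩⟩)
  set m := n + 1
  have hfx : f x ∈ interior (K m) := hKmono n hn
  -- C is contained in f ⁻¹' (K m)
  have hsub : C ⊆ f ⁻¹' (K m) := by
    have hcover : C ⊆ f ⁻¹' (interior (K m)) ∪ f ⁻¹' (closure (K m))ᶜ := by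
      intro y _
      by_cases h1 : f y ∈ interior (K m)
      · exact Or.inl h1
      by_cases h2 : f y ∈ closure (K m)
      · exfalso
        have : f y ∈ Set.range f ∩ frontier (K m) := ⟨⟨y, rfl⟩, h2, h1⟩
        rw [hKbdry m] at this
        exact this
      · exact Or.inr h2
    have hdisj : Disjoint (f ⁻¹' (interior (K m))) (f ⁻¹' (closure (K m))ᶜ) := by
      refine Set.disjoint_left.mpr fun y hy hy' => hy' ?_
      exact subset_closure (interior_subset hy)
    have := hCpre.subset_left_of_subset_union (isOpen_interior.preimage hcont)
      (isClosed_closure.isOpen_compl.preimage hcont) hdisj hcover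
      ⟨x, mem_connectedComponentIn hx, hfx⟩
    exact this.trans (preimage_mono interior_subset)
  exact (hproper (K m) (hKc m)).of_isClosed_subset hclosed hsub
end
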